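/- Let 1 ≤ s ≤ m-1, k ≥ 2, and set c₁ = k-2+s, c₂ = k-2+m-s. If P₄ ∈ H^s_{k-2} and Q = (c₂ x x* - c₁ x* x)P₄, then d d* Q = c₁c₂(c₁+c₂+2)P₄ and d* d Q = -c₁c₂(c₁+c₂+2)P₄. -/
import Mathlib


open MvPolynomial Finset

noncomputable section

/-- Polynomial differential forms on ℝ^m: a coefficient polynomial for each
increasing multi-index `I ⊆ {1,…,m}` (representing `dx_I`). -/
abbrev PForm (m : ℕ) := Finset (Fin m) → MvPolynomial (Fin m) ℝ

/-- The sign `(-1)^{#{i ∈ I : i < j}}`. -/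
def sgn (m : ℕ) (j : Fin m) (I : Finset (Fin m)) : ℝ :=
  (-1 : ℝ) ^ (I.filter (fun i => i < j)).card

/-- Exterior multiplication `dx_j ∧ ·`. -/
def wedgeOp (m : ℕ) (j : Fin m) : PForm m →ₗ[ℝ] PForm m where
  toFun P I := if j ∈ I then sgn m j I • P (I.erase j) else 0
  map_add' P Q := by
    funext I; by_cases h : j ∈ I <;> simp [h, smul_add]
  map_smul' c P := by
    funext I; by_cases h : j ∈ I <;> simp [h, smul_smul, mul_comm]

/-- Contraction (interior product) `dx_j ⌟ ·`. -/
def contrOp (m : ℕ) (j : Fin m) : PForm m →ₗ[ℝ] PForm m where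
  toFun P I := if j ∈ I then 0 else sgn m j I • P (insert j I)
  map_add' P Q := by
    funext I; by_cases h : j ∈ I <;> simp [h, smul_add]
  map_smul' c P := by
    funext I; by_cases h : j ∈ I <;> simp [h, smul_smul, mul_comm]

/-- Multiplication of the coefficients by the variable `x_j`. -/
def mulXOp (m : ℕ) (j : Fin m) : PForm m →ₗ[ℝ] PForm m where
  toFun P I := X j * P I
  map_add' P Q := by funext I; simp [mul_add]
  map_smul' c P := by funext I; simp [mul_smul_comm]

/-- Partial derivative `∂_{x_j}` of the coefficients. -/
def pderivOp (m : ℕ) (j : Fin m) : PForm m →ₗ[ℝ] PForm m where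
  toFun P I := pderiv j (P I)
  map_add' P Q := by funext I; simp
  map_smul' c P := by funext I; simp

/-- `x = -∑_j x_j dx_j ∧`. -/
def xOp (m : ℕ) : PForm m →ₗ[ℝ] PForm m := - ∑ j, mulXOp m j ∘ₗ wedgeOp m j

/-- `x* = ∑_j x_j dx_j ⌟`. -/
def xStarOp (m : ℕ) : PForm m →ₗ[ℝ] PForm m := ∑ j, mulXOp m j ∘ₗ contrOp m j

/-- The de Rham differential `d = ∑_j ∂_{x_j} dx_j ∧`. -/
def dOp (m : ℕ) : PForm m →ₗ[ℝ] PForm m := ∑ j, wedgeOp m j ∘ₗ pderivOp m j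

/-- Its formal adjoint `d* = -∑_j ∂_{x_j} dx_j ⌟`. -/
def dStarOp (m : ℕ) : PForm m →ₗ[ℝ] PForm m := - ∑ j, contrOp m j ∘ₗ pderivOp m j

/-- The Euler operator `E = ∑_j x_j ∂_{x_j}`. -/
def eulerOp (m : ℕ) : PForm m →ₗ[ℝ] PForm m := ∑ j, mulXOp m j ∘ₗ pderivOp m j

/-- The skew Euler operator `Ê = ∑_j (dx_j∧)(dx_j⌟)`. -/
def skewEulerOp (m : ℕ) : PForm m →ₗ[ℝ] PForm m := ∑ j, wedgeOp m j ∘ₗ contrOp m j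

/-- The componentwise Laplacian `Δ = ∑_j ∂²_{x_j}`. -/
def lapOp (m : ℕ) : PForm m →ₗ[ℝ] PForm m := ∑ j, pderivOp m j ∘ₗ pderivOp m j

/-- Multiplication by `r² = x_1² + ⋯ + x_m²`. -/
def r2Op (m : ℕ) : PForm m →ₗ[ℝ] PForm m := ∑ j, mulXOp m j ∘ₗ mulXOp m j

/-- `P` is an `s`-form: only components `dx_I` with `|I| = s` occur. -/
def IsSForm (m s : ℕ) (P : PForm m) : Prop := ∀ I : Finset (Fin m), I.card ≠ s → P I = 0

/-- All coefficients of `P` are homogeneous polynomials of degree `k`. -/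
def IsHomForm (m k : ℕ) (P : PForm m) : Prop := ∀ I : Finset (Fin m), (P I).IsHomogeneous k

/-- `H^s_k`: homogeneous polynomial `s`-forms of degree `k` solving the
Hodge–de Rham system `dP = 0`, `d*P = 0`. -/
def Hset (m s k : ℕ) : Set (PForm m) :=
  {P | IsSForm m s P ∧ IsHomForm m k P ∧ dOp m P = 0 ∧ dStarOp m P = 0}

/-- `ℳ_k`: homogeneous degree-`k` polynomial forms with `(d + d*)P = 0`. -/
def Mk (m k : ℕ) : Set (PForm m) :=
  {P | IsHomForm m k P ∧ (dOp m + dStarOp m) P = 0}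

/-- `M_{s,k} = [(k-1+m-s)x* - (k-1+s)x] H^s_{k-1}`. -/
def Mset (m s k : ℕ) : Set (PForm m) :=
  (⇑(((k : ℝ) - 1 + m - s) • xStarOp m - ((k : ℝ) - 1 + s) • xOp m)) '' Hset m s (k - 1)

end
section Helpers

variable {m : ℕ}

@[simp] lemma wedgeOp_apply (j : Fin m) (P : PForm m) (I : Finset (Fin m)) :
    wedgeOp m j P I = if j ∈ I then sgn m j I • P (I.erase j) else 0 := rfl

@[simp] lemma contrOp_apply (j : Fin m) (P : PForm m) (I : Finset (Fin m)) :
    contrOp m j P I = if j ∈ I then 0 else sgn m j I • P (insert j I) := rfl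

@[simp] lemma mulXOp_apply (j : Fin m) (P : PForm m) (I : Finset (Fin m)) :
    mulXOp m j P I = X j * P I := rfl

@[simp] lemma pderivOp_apply (j : Fin m) (P : PForm m) (I : Finset (Fin m)) :
    pderivOp m j P I = pderiv j (P I) := rfl

lemma sgn_insert {I : Finset (Fin m)} (j k : Fin m) (hk : k ∉ I) :
    sgn m j (insert k I) = (if k < j then (-1 : ℝ) else 1) * sgn m j I := by
  unfold sgn
  rw [Finset.filter_insert]
  by_cases h : k < j
  · rw [if_pos h, if_pos h,
      Finset.card_insert_of_notMem (fun hmem => hk (Finset.mem_filter.1 hmem).1), pow_succ]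
    ring
  · rw [if_neg h, if_neg h, one_mul]

lemma sgn_erase {I : Finset (Fin m)} (j k : Fin m) (hk : k ∈ I) :
    sgn m j I = (if k < j then (-1 : ℝ) else 1) * sgn m j (I.erase k) := by
  conv_lhs => rw [← Finset.insert_erase hk]
  rw [sgn_insert j k (Finset.notMem_erase k I)]

lemma sgn_mul_self (j : Fin m) (I : Finset (Fin m)) : sgn m j I * sgn m j I = 1 := by
  unfold sgn; rw [← pow_add]; exact Even.neg_one_pow ⟨_, rfl⟩

lemma sgn_erase_self (j : Fin m) (I : Finset (Fin m)) :
    sgn m j (I.erase j) = sgn m j I := by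
  by_cases h : j ∈ I
  · rw [sgn_erase j j h, if_neg (lt_irrefl j), one_mul]
  · rw [Finset.erase_eq_of_notMem h]

lemma sgn_cross {j k : Fin m} (h : j ≠ k) :
    (if j < k then (-1:ℝ) else 1) * (if k < j then (-1:ℝ) else 1) = -1 := by
  rcases h.lt_or_gt with hlt | hlt
  · rw [if_pos hlt, if_neg (asymm hlt)]; ring
  · rw [if_neg (asymm hlt), if_pos hlt]; ring

lemma sgn_cross_add {j k : Fin m} (h : j ≠ k) :
    (if j < k then (-1:ℝ) else 1) + (if k < j then (-1:ℝ) else 1) = 0 := by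
  rcases h.lt_or_gt with hlt | hlt
  · rw [if_pos hlt, if_neg (asymm hlt)]; ring
  · rw [if_neg (asymm hlt), if_pos hlt]; ring

end Helpers
section Rels

variable {m : ℕ}

lemma wedge_contr (j k : Fin m) :
    wedgeOp m j * contrOp m k + contrOp m k * wedgeOp m j
      = if j = k then (1 : Module.End ℝ (PForm m)) else 0 := by
  refine LinearMap.ext fun P => funext fun I => ?_
  simp only [LinearMap.add_apply, Module.End.mul_apply, Pi.add_apply, wedgeOp_apply,
    contrOp_apply]
  by_cases hjk : j = k
  · subst hjk
    rw [if_pos rfl, Module.End.one_apply]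
    by_cases h : j ∈ I
    · rw [if_pos h, if_pos h, if_neg (Finset.notMem_erase j I), Finset.insert_erase h,
        sgn_erase_self, smul_smul, sgn_mul_self, one_smul, add_zero]
    · rw [if_neg h, if_neg h, if_pos (Finset.mem_insert_self j I), Finset.erase_insert h,
        sgn_insert j j h, if_neg (lt_irrefl j), one_mul, smul_smul, sgn_mul_self, one_smul,
        zero_add]
  · rw [if_neg hjk, LinearMap.zero_apply, Pi.zero_apply]
    by_cases hj : j ∈ I <;> by_cases hkI : k ∈ I
    · rw [if_pos hj, if_pos hkI,
        if_pos (Finset.mem_erase.2 ⟨Ne.symm hjk, hkI⟩), smul_zero, add_zero]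
    · rw [if_pos hj, if_neg hkI, if_neg (fun hmem => hkI (Finset.mem_erase.1 hmem).2),
        if_pos (Finset.mem_insert.2 (Or.inr hj)), Finset.erase_insert_of_ne (Ne.symm hjk),
        smul_smul, smul_smul, ← add_smul]
      have hc : sgn m j I * sgn m k (I.erase j) + sgn m k I * sgn m j (insert k I) = 0 := by
        rw [sgn_erase k j hj, sgn_insert j k hkI]
        have h2 := sgn_cross hjk
        linear_combination (sgn m j I * sgn m k (I.erase j)) * h2
      rw [hc, zero_smul]
    · rw [if_neg hj, if_pos hkI, zero_add]
    · rw [if_neg hj, if_neg hkI, zero_add,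
        if_neg (fun hmem => hj ((Finset.mem_insert.1 hmem).resolve_left hjk)), smul_zero]

lemma wedge_mul_self (j : Fin m) : wedgeOp m j * wedgeOp m j = (0 : Module.End ℝ (PForm m)) := by
  refine LinearMap.ext fun P => funext fun I => ?_
  simp only [Module.End.mul_apply, LinearMap.zero_apply, Pi.zero_apply, wedgeOp_apply]
  by_cases h : j ∈ I
  · rw [if_pos h, if_neg (Finset.notMem_erase j I), smul_zero]
  · rw [if_neg h]

lemma contr_mul_self (j : Fin m) : contrOp m j * contrOp m j = (0 : Module.End ℝ (PForm m)) := by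
  refine LinearMap.ext fun P => funext fun I => ?_
  simp only [Module.End.mul_apply, LinearMap.zero_apply, Pi.zero_apply, contrOp_apply]
  by_cases h : j ∈ I
  · rw [if_pos h]
  · rw [if_neg h, if_pos (Finset.mem_insert_self j I), smul_zero]

lemma wedge_wedge (j k : Fin m) :
    wedgeOp m j * wedgeOp m k + wedgeOp m k * wedgeOp m j = (0 : Module.End ℝ (PForm m)) := by
  by_cases hjk : j = k
  · subst hjk; rw [wedge_mul_self, add_zero]
  refine LinearMap.ext fun P => funext fun I => ?_
  simp only [LinearMap.add_apply, Module.End.mul_apply, Pi.add_apply, LinearMap.zero_apply,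
    Pi.zero_apply, wedgeOp_apply]
  by_cases hj : j ∈ I <;> by_cases hkI : k ∈ I
  · rw [if_pos hj, if_pos hkI, if_pos (Finset.mem_erase.2 ⟨Ne.symm hjk, hkI⟩),
      if_pos (Finset.mem_erase.2 ⟨hjk, hj⟩), smul_smul, smul_smul,
      Finset.erase_right_comm (a := j) (b := k), ← add_smul]
    have hc : sgn m j I * sgn m k (I.erase j) + sgn m k I * sgn m j (I.erase k) = 0 := by
      rw [sgn_erase j k hkI, sgn_erase k j hj]
      have h2 := sgn_cross_add hjk
      linear_combination (sgn m j (I.erase k) * sgn m k (I.erase j)) * h2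
    rw [hc, zero_smul]
  · rw [if_pos hj, if_neg hkI, if_neg (fun hmem => hkI (Finset.mem_erase.1 hmem).2), smul_zero,
      add_zero]
  · rw [if_neg hj, if_pos hkI, if_neg (fun hmem => hj (Finset.mem_erase.1 hmem).2), smul_zero,
      zero_add]
  · rw [if_neg hj, if_neg hkI, add_zero]

lemma contr_contr (j k : Fin m) :
    contrOp m j * contrOp m k + contrOp m k * contrOp m j = (0 : Module.End ℝ (PForm m)) := by
  by_cases hjk : j = k
  · subst hjk; rw [contr_mul_self, add_zero]
  refine LinearMap.ext fun P => funext fun I => ?_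
  simp only [LinearMap.add_apply, Module.End.mul_apply, Pi.add_apply, LinearMap.zero_apply,
    Pi.zero_apply, contrOp_apply]
  by_cases hj : j ∈ I <;> by_cases hkI : k ∈ I
  · rw [if_pos hj, if_pos hkI, add_zero]
  · rw [if_pos hj, if_neg hkI, if_pos (Finset.mem_insert.2 (Or.inr hj)), smul_zero, zero_add]
  · rw [if_neg hj, if_pos hkI, if_pos (Finset.mem_insert.2 (Or.inr hkI)), smul_zero, add_zero]
  · rw [if_neg hj, if_neg hkI,
      if_neg (fun hmem => hkI ((Finset.mem_insert.1 hmem).resolve_left (Ne.symm hjk))),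
      if_neg (fun hmem => hj ((Finset.mem_insert.1 hmem).resolve_left hjk)),
      smul_smul, smul_smul, Finset.insert_comm, ← add_smul]
    have hc : sgn m j I * sgn m k (insert j I) + sgn m k I * sgn m j (insert k I) = 0 := by
      rw [sgn_insert k j hj, sgn_insert j k hkI]
      have h2 := sgn_cross_add hjk
      linear_combination (sgn m j I * sgn m k I) * h2
    rw [hc, zero_smul]

lemma wedge_mulX (j k : Fin m) :
    wedgeOp m j * mulXOp m k = mulXOp m k * wedgeOp m j := by
  refine LinearMap.ext fun P => funext fun I => ?_
  simp only [Module.End.mul_apply, wedgeOp_apply, mulXOp_apply]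
  by_cases h : j ∈ I
  · rw [if_pos h, if_pos h, mul_smul_comm]
  · rw [if_neg h, if_neg h, mul_zero]

lemma contr_mulX (j k : Fin m) :
    contrOp m j * mulXOp m k = mulXOp m k * contrOp m j := by
  refine LinearMap.ext fun P => funext fun I => ?_
  simp only [Module.End.mul_apply, contrOp_apply, mulXOp_apply]
  by_cases h : j ∈ I
  · rw [if_pos h, if_pos h, mul_zero]
  · rw [if_neg h, if_neg h, mul_smul_comm]

lemma pderiv_wedge (j k : Fin m) :
    pderivOp m j * wedgeOp m k = wedgeOp m k * pderivOp m j := by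
  refine LinearMap.ext fun P => funext fun I => ?_
  simp only [Module.End.mul_apply, pderivOp_apply, wedgeOp_apply]
  by_cases h : k ∈ I
  · rw [if_pos h, if_pos h, Derivation.map_smul]
  · rw [if_neg h, if_neg h, map_zero]

lemma pderiv_contr (j k : Fin m) :
    pderivOp m j * contrOp m k = contrOp m k * pderivOp m j := by
  refine LinearMap.ext fun P => funext fun I => ?_
  simp only [Module.End.mul_apply, pderivOp_apply, contrOp_apply]
  by_cases h : k ∈ I
  · rw [if_pos h, if_pos h, map_zero]
  · rw [if_neg h, if_neg h, Derivation.map_smul]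

lemma pderiv_mulX (j k : Fin m) :
    pderivOp m j * mulXOp m k
      = mulXOp m k * pderivOp m j + if j = k then (1 : Module.End ℝ (PForm m)) else 0 := by
  refine LinearMap.ext fun P => funext fun I => ?_
  simp only [LinearMap.add_apply, Module.End.mul_apply, Pi.add_apply, pderivOp_apply,
    mulXOp_apply]
  rw [pderiv_mul]
  by_cases h : j = k
  · subst h
    rw [pderiv_X_self, one_mul, if_pos rfl, Module.End.one_apply, add_comm]
  · rw [pderiv_X_of_ne (Ne.symm h), zero_mul, zero_add, if_neg h, LinearMap.zero_apply,
      Pi.zero_apply, add_zero]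

end Rels
section Acomm

variable {m : ℕ}

lemma sum_anticomm_helper (A B : Fin m → Module.End ℝ (PForm m)) :
    (∑ j, A j) * (∑ k, B k) + (∑ k, B k) * (∑ j, A j)
      = ∑ j, ∑ k, (A j * B k + B k * A j) := by
  simp only [Finset.sum_mul, Finset.mul_sum]
  rw [Finset.sum_comm (f := fun x i => A i * B x), ← Finset.sum_add_distrib]
  exact Finset.sum_congr rfl fun j _ => (Finset.sum_add_distrib).symm

lemma pair1 (j k : Fin m) :
    (wedgeOp m j * pderivOp m j) * (mulXOp m k * contrOp m k)
      + (mulXOp m k * contrOp m k) * (wedgeOp m j * pderivOp m j)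
      = if j = k then mulXOp m j * pderivOp m j + wedgeOp m j * contrOp m j else 0 := by
  set a := wedgeOp m j
  set b := pderivOp m j
  set c := mulXOp m k
  set d := contrOp m k
  have rel1 : b * c = c * b + if j = k then 1 else 0 := pderiv_mulX j k
  have rel2 : a * c = c * a := wedge_mulX j k
  have rel3 : b * d = d * b := pderiv_contr j k
  have rel4 : a * d + d * a = if j = k then 1 else 0 := wedge_contr j k
  by_cases h : j = k
  · subst h
    rw [if_pos rfl] at rel1 rel4 ⊢
    calc a * b * (c * d) + c * d * (a * b)
        = a * (b * c) * d + c * d * a * b := by noncomm_ring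
      _ = a * (c * b + 1) * d + c * d * a * b := by rw [rel1]
      _ = (a * c) * (b * d) + a * d + c * d * a * b := by noncomm_ring
      _ = (c * a) * (d * b) + a * d + c * d * a * b := by rw [rel2, rel3]
      _ = c * (a * d + d * a) * b + a * d := by noncomm_ring
      _ = c * 1 * b + a * d := by rw [rel4]
      _ = c * b + a * d := by noncomm_ring
  · rw [if_neg h] at rel1 rel4 ⊢
    rw [add_zero] at rel1
    calc a * b * (c * d) + c * d * (a * b)
        = a * (b * c) * d + c * d * a * b := by noncomm_ring
      _ = a * (c * b) * d + c * d * a * b := by rw [rel1]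
      _ = (a * c) * (b * d) + c * d * a * b := by noncomm_ring
      _ = (c * a) * (d * b) + c * d * a * b := by rw [rel2, rel3]
      _ = c * (a * d + d * a) * b := by noncomm_ring
      _ = c * 0 * b := by rw [rel4]
      _ = 0 := by noncomm_ring

lemma pair2 (j k : Fin m) :
    (contrOp m j * pderivOp m j) * (mulXOp m k * wedgeOp m k)
      + (mulXOp m k * wedgeOp m k) * (contrOp m j * pderivOp m j)
      = if j = k then mulXOp m j * pderivOp m j + (1 - wedgeOp m j * contrOp m j) else 0 := by
  set a := contrOp m j
  set b := pderivOp m j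
  set c := mulXOp m k
  set d := wedgeOp m k
  have rel1 : b * c = c * b + if j = k then 1 else 0 := pderiv_mulX j k
  have rel2 : a * c = c * a := contr_mulX j k
  have rel3 : b * d = d * b := pderiv_wedge j k
  have rel4 : a * d + d * a = if k = j then 1 else 0 := by
    have := wedge_contr k j; rw [add_comm] at this; exact this
  by_cases h : j = k
  · subst h
    rw [if_pos rfl] at rel1 rel4 ⊢
    calc a * b * (c * d) + c * d * (a * b)
        = a * (b * c) * d + c * d * a * b := by noncomm_ring
      _ = a * (c * b + 1) * d + c * d * a * b := by rw [rel1]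
      _ = (a * c) * (b * d) + a * d + c * d * a * b := by noncomm_ring
      _ = (c * a) * (d * b) + a * d + c * d * a * b := by rw [rel2, rel3]
      _ = c * (a * d + d * a) * b + a * d := by noncomm_ring
      _ = c * 1 * b + a * d := by rw [rel4]
      _ = c * b + a * d := by noncomm_ring
      _ = c * b + (1 - d * a) := by
          congr 1
          rw [eq_sub_iff_add_eq]
          exact rel4
  · rw [if_neg h] at rel1
    rw [if_neg (fun hh => h hh.symm)] at rel4
    rw [add_zero] at rel1
    rw [if_neg h]
    calc a * b * (c * d) + c * d * (a * b)
        = a * (b * c) * d + c * d * a * b := by noncomm_ring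
      _ = a * (c * b) * d + c * d * a * b := by rw [rel1]
      _ = (a * c) * (b * d) + c * d * a * b := by noncomm_ring
      _ = (c * a) * (d * b) + c * d * a * b := by rw [rel2, rel3]
      _ = c * (a * d + d * a) * b := by noncomm_ring
      _ = c * 0 * b := by rw [rel4]
      _ = 0 := by noncomm_ring

lemma pair3 (j k : Fin m) :
    (wedgeOp m j * pderivOp m j) * (mulXOp m k * wedgeOp m k)
      + (mulXOp m k * wedgeOp m k) * (wedgeOp m j * pderivOp m j) = 0 := by
  set a := wedgeOp m j
  set b := pderivOp m j
  set c := mulXOp m k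
  set d := wedgeOp m k
  have rel1 : b * c = c * b + if j = k then 1 else 0 := pderiv_mulX j k
  have rel2 : a * c = c * a := wedge_mulX j k
  have rel3 : b * d = d * b := pderiv_wedge j k
  have rel4 : a * d + d * a = 0 := wedge_wedge j k
  by_cases h : j = k
  · subst h
    rw [if_pos rfl] at rel1
    have rel5 : a * d = 0 := wedge_mul_self j
    calc a * b * (c * d) + c * d * (a * b)
        = a * (b * c) * d + c * d * a * b := by noncomm_ring
      _ = a * (c * b + 1) * d + c * d * a * b := by rw [rel1]
      _ = (a * c) * (b * d) + a * d + c * d * a * b := by noncomm_ring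
      _ = (c * a) * (d * b) + 0 + c * d * a * b := by rw [rel2, rel3, rel5]
      _ = c * (a * d + d * a) * b := by noncomm_ring
      _ = c * 0 * b := by rw [rel4]
      _ = 0 := by noncomm_ring
  · rw [if_neg h, add_zero] at rel1
    calc a * b * (c * d) + c * d * (a * b)
        = a * (b * c) * d + c * d * a * b := by noncomm_ring
      _ = a * (c * b) * d + c * d * a * b := by rw [rel1]
      _ = (a * c) * (b * d) + c * d * a * b := by noncomm_ring
      _ = (c * a) * (d * b) + c * d * a * b := by rw [rel2, rel3]
      _ = c * (a * d + d * a) * b := by noncomm_ring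
      _ = c * 0 * b := by rw [rel4]
      _ = 0 := by noncomm_ring

lemma pair4 (j k : Fin m) :
    (contrOp m j * pderivOp m j) * (mulXOp m k * contrOp m k)
      + (mulXOp m k * contrOp m k) * (contrOp m j * pderivOp m j) = 0 := by
  set a := contrOp m j
  set b := pderivOp m j
  set c := mulXOp m k
  set d := contrOp m k
  have rel1 : b * c = c * b + if j = k then 1 else 0 := pderiv_mulX j k
  have rel2 : a * c = c * a := contr_mulX j k
  have rel3 : b * d = d * b := pderiv_contr j k
  have rel4 : a * d + d * a = 0 := contr_contr j k
  by_cases h : j = k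
  · subst h
    rw [if_pos rfl] at rel1
    have rel5 : a * d = 0 := contr_mul_self j
    calc a * b * (c * d) + c * d * (a * b)
        = a * (b * c) * d + c * d * a * b := by noncomm_ring
      _ = a * (c * b + 1) * d + c * d * a * b := by rw [rel1]
      _ = (a * c) * (b * d) + a * d + c * d * a * b := by noncomm_ring
      _ = (c * a) * (d * b) + 0 + c * d * a * b := by rw [rel2, rel3, rel5]
      _ = c * (a * d + d * a) * b := by noncomm_ring
      _ = c * 0 * b := by rw [rel4]
      _ = 0 := by noncomm_ring
  · rw [if_neg h, add_zero] at rel1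
    calc a * b * (c * d) + c * d * (a * b)
        = a * (b * c) * d + c * d * a * b := by noncomm_ring
      _ = a * (c * b) * d + c * d * a * b := by rw [rel1]
      _ = (a * c) * (b * d) + c * d * a * b := by noncomm_ring
      _ = (c * a) * (d * b) + c * d * a * b := by rw [rel2, rel3]
      _ = c * (a * d + d * a) * b := by noncomm_ring
      _ = c * 0 * b := by rw [rel4]
      _ = 0 := by noncomm_ring

lemma A1 (m : ℕ) : dOp m * xStarOp m + xStarOp m * dOp m = eulerOp m + skewEulerOp m := by
  unfold dOp xStarOp eulerOp skewEulerOp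
  simp only [← Module.End.mul_eq_comp]
  rw [sum_anticomm_helper,
    Finset.sum_congr rfl fun j _ => Finset.sum_congr rfl fun k _ => pair1 j k]
  simp only [Finset.sum_ite_eq, Finset.mem_univ, if_true]
  exact Finset.sum_add_distrib

lemma A2 (m : ℕ) : dStarOp m * xOp m + xOp m * dStarOp m
    = eulerOp m + (m • (1 : Module.End ℝ (PForm m)) - skewEulerOp m) := by
  unfold dStarOp xOp eulerOp skewEulerOp
  simp only [← Module.End.mul_eq_comp]
  rw [show ∀ (a b : PForm m →ₗ[ℝ] PForm m), -a * -b + -b * -a = a * b + b * a by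
    intro a b
    simp only [Module.End.mul_eq_comp, LinearMap.neg_comp, LinearMap.comp_neg, neg_neg]]
  rw [sum_anticomm_helper,
    Finset.sum_congr rfl fun j _ => Finset.sum_congr rfl fun k _ => pair2 j k]
  simp only [Finset.sum_ite_eq, Finset.mem_univ, if_true]
  rw [Finset.sum_add_distrib, Finset.sum_sub_distrib, Finset.sum_const, Finset.card_univ,
    Fintype.card_fin]

lemma A3 (m : ℕ) : dOp m * xOp m + xOp m * dOp m = 0 := by
  unfold dOp xOp
  simp only [← Module.End.mul_eq_comp]
  rw [show ∀ (a b : PForm m →ₗ[ℝ] PForm m), a * -b + -b * a = -(a * b + b * a) by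
    intro a b
    simp only [Module.End.mul_eq_comp, LinearMap.neg_comp, LinearMap.comp_neg, neg_add]]
  rw [sum_anticomm_helper,
    Finset.sum_congr rfl fun j _ => Finset.sum_congr rfl fun k _ => pair3 j k]
  simp

lemma A4 (m : ℕ) : dStarOp m * xStarOp m + xStarOp m * dStarOp m = 0 := by
  unfold dStarOp xStarOp
  simp only [← Module.End.mul_eq_comp]
  rw [show ∀ (a b : PForm m →ₗ[ℝ] PForm m), -a * b + b * -a = -(a * b + b * a) by
    intro a b
    simp only [Module.End.mul_eq_comp, LinearMap.neg_comp, LinearMap.comp_neg, neg_add]]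
  rw [sum_anticomm_helper,
    Finset.sum_congr rfl fun j _ => Finset.sum_congr rfl fun k _ => pair4 j k]
  simp

end Acomm
section Eigen

variable {m : ℕ}

lemma euler_monomial (v : Fin m →₀ ℕ) (c : ℝ) :
    ∑ j, X j * pderiv j (monomial v c) = (∑ j, v j) • monomial v c := by
  have key : ∀ j : Fin m, X j * pderiv j (monomial v c) = v j • monomial v c := by
    intro j
    rw [pderiv_monomial]
    by_cases h : v j = 0
    · simp [h]
    · have hle : Finsupp.single j 1 ≤ v := Finsupp.single_le_iff.2 (Nat.one_le_iff_ne_zero.2 h)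
      have hv : Finsupp.single j 1 + (v - Finsupp.single j 1) = v := add_tsub_cancel_of_le hle
      rw [show (X j : MvPolynomial (Fin m) ℝ) = X j ^ 1 by rw [pow_one],
        ← monomial_single_add, hv, smul_monomial]
      congr 1
      rw [nsmul_eq_mul, mul_comm]
  rw [Finset.sum_congr rfl fun j _ => key j, ← Finset.sum_smul]

lemma euler_poly {n : ℕ} {p : MvPolynomial (Fin m) ℝ} (hp : p.IsHomogeneous n) :
    ∑ j, X j * pderiv j p = n • p := by
  conv_lhs => rw [p.as_sum]
  conv_rhs => rw [p.as_sum]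
  simp only [map_sum, Finset.mul_sum, Finset.smul_sum]
  rw [Finset.sum_comm]
  refine Finset.sum_congr rfl fun v hv => ?_
  rw [euler_monomial]
  congr 1
  have hdeg : v.degree = n := by
    by_contra hne
    exact (MvPolynomial.mem_support_iff.1 hv) (hp.coeff_eq_zero hne)
  rw [← hdeg, Finsupp.degree]
  exact (Finset.sum_subset (Finset.subset_univ _) (fun x _ hx =>
    Finsupp.notMem_support_iff.1 hx)).symm

lemma euler_eigen {k : ℕ} {P : PForm m} (hH : IsHomForm m k P) :
    eulerOp m P = k • P := by
  funext I
  have h1 : eulerOp m P I = ∑ j, X j * pderiv j (P I) := by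
    unfold eulerOp
    rw [LinearMap.sum_apply, Finset.sum_apply]
    rfl
  rw [h1, euler_poly (hH I)]
  rfl

lemma skew_eigen {s : ℕ} {P : PForm m} (hS : IsSForm m s P) :
    skewEulerOp m P = s • P := by
  funext I
  have h1 : skewEulerOp m P I
      = ∑ j, if j ∈ I then sgn m j I • contrOp m j P (I.erase j) else 0 := by
    unfold skewEulerOp
    rw [LinearMap.sum_apply, Finset.sum_apply]
    rfl
  have h2 : ∀ j : Fin m,
      (if j ∈ I then sgn m j I • contrOp m j P (I.erase j) else 0)
        = if j ∈ I then P I else 0 := by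
    intro j
    by_cases h : j ∈ I
    · rw [if_pos h, if_pos h, contrOp_apply, if_neg (Finset.notMem_erase j I),
        Finset.insert_erase h, sgn_erase_self, smul_smul, sgn_mul_self, one_smul]
    · rw [if_neg h, if_neg h]
  rw [h1, Finset.sum_congr rfl fun j _ => h2 j, Finset.sum_ite_mem, Finset.univ_inter,
    Finset.sum_const]
  by_cases hc : I.card = s
  · rw [hc]; rfl
  · rw [hS I hc, smul_zero]
    show (0 : MvPolynomial (Fin m) ℝ) = s • P I
    rw [hS I hc, smul_zero]

lemma xOp_apply_eq (P : PForm m) (I : Finset (Fin m)) :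
    xOp m P I = -∑ j, if j ∈ I then X j * (sgn m j I • P (I.erase j)) else 0 := by
  unfold xOp
  rw [LinearMap.neg_apply, LinearMap.sum_apply, Pi.neg_apply, Finset.sum_apply]
  congr 1
  refine Finset.sum_congr rfl fun j _ => ?_
  rw [LinearMap.comp_apply, mulXOp_apply, wedgeOp_apply]
  by_cases h : j ∈ I
  · rw [if_pos h, if_pos h]
  · rw [if_neg h, if_neg h, mul_zero]

lemma xStarOp_apply_eq (P : PForm m) (I : Finset (Fin m)) :
    xStarOp m P I = ∑ j, if j ∈ I then 0 else X j * (sgn m j I • P (insert j I)) := by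
  unfold xStarOp
  rw [LinearMap.sum_apply, Finset.sum_apply]
  refine Finset.sum_congr rfl fun j _ => ?_
  rw [LinearMap.comp_apply, mulXOp_apply, contrOp_apply]
  by_cases h : j ∈ I
  · rw [if_pos h, if_pos h, mul_zero]
  · rw [if_neg h, if_neg h]

lemma isHomForm_xOp {k : ℕ} {P : PForm m} (h : IsHomForm m k P) :
    IsHomForm m (k + 1) (xOp m P) := by
  intro I
  rw [← mem_homogeneousSubmodule, xOp_apply_eq]
  refine neg_mem (Submodule.sum_mem _ fun j _ => ?_)
  by_cases hj : j ∈ I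
  · rw [if_pos hj, mul_smul_comm]
    refine Submodule.smul_mem _ _ ?_
    rw [mem_homogeneousSubmodule]
    have := (isHomogeneous_X ℝ j).mul (h (I.erase j))
    rwa [add_comm] at this
  · rw [if_neg hj]; exact Submodule.zero_mem _

lemma isHomForm_xStarOp {k : ℕ} {P : PForm m} (h : IsHomForm m k P) :
    IsHomForm m (k + 1) (xStarOp m P) := by
  intro I
  rw [← mem_homogeneousSubmodule, xStarOp_apply_eq]
  refine Submodule.sum_mem _ fun j _ => ?_
  by_cases hj : j ∈ I
  · rw [if_pos hj]; exact Submodule.zero_mem _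
  · rw [if_neg hj, mul_smul_comm]
    refine Submodule.smul_mem _ _ ?_
    rw [mem_homogeneousSubmodule]
    have := (isHomogeneous_X ℝ j).mul (h (insert j I))
    rwa [add_comm] at this

lemma isSForm_xOp {s : ℕ} {P : PForm m} (h : IsSForm m s P) :
    IsSForm m (s + 1) (xOp m P) := by
  intro I hI
  rw [xOp_apply_eq]
  rw [Finset.sum_eq_zero, neg_zero]
  intro j _
  by_cases hj : j ∈ I
  · rw [if_pos hj, h (I.erase j) ?_, smul_zero, mul_zero]
    have hcard := Finset.card_erase_of_mem hj
    have hpos : 1 ≤ I.card := Finset.card_pos.2 ⟨j, hj⟩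
    omega
  · rw [if_neg hj]

lemma isSForm_xStarOp {s : ℕ} (hs : 1 ≤ s) {P : PForm m} (h : IsSForm m s P) :
    IsSForm m (s - 1) (xStarOp m P) := by
  intro I hI
  rw [xStarOp_apply_eq]
  rw [Finset.sum_eq_zero]
  intro j _
  by_cases hj : j ∈ I
  · rw [if_pos hj]
  · rw [if_neg hj, h (insert j I) ?_, smul_zero, mul_zero]
    have hcard := Finset.card_insert_of_notMem hj
    omega

end Eigen
/-- for `P₄ ∈ H^s_{k-2}` and `Q = (c₂ x x* - c₁ x* x)P₄`,
`dd*Q = c₁c₂(c₁+c₂+2)P₄` and `d*dQ = -c₁c₂(c₁+c₂+2)P₄`. -/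
theorem ddStar_on_W (m s k : ℕ) (hs : 1 ≤ s) (hsm : s ≤ m - 1) (hk : 2 ≤ k)
    (P₄ : PForm m) (hP₄ : P₄ ∈ Hset m s (k - 2)) :
    let c₁ : ℝ := (k : ℝ) - 2 + s
    let c₂ : ℝ := (k : ℝ) - 2 + m - s
    let Q := (c₂ • (xOp m ∘ₗ xStarOp m) - c₁ • (xStarOp m ∘ₗ xOp m)) P₄
    dOp m (dStarOp m Q) = (c₁ * c₂ * (c₁ + c₂ + 2)) • P₄ ∧
    dStarOp m (dOp m Q) = -(c₁ * c₂ * (c₁ + c₂ + 2)) • P₄ := by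
  intro c₁ c₂ Q
  obtain ⟨hS, hH, hd, hds⟩ := hP₄
  have hc₁ : c₁ = (k : ℝ) - 2 + s := rfl
  have hc₂ : c₂ = (k : ℝ) - 2 + m - s := rfl
  have cast2 : ((k - 2 : ℕ) : ℝ) = (k : ℝ) - 2 := by
    rw [Nat.cast_sub hk]; norm_num
  have cast1 : ((k - 1 : ℕ) : ℝ) = (k : ℝ) - 1 := by
    rw [Nat.cast_sub (by omega)]; norm_num
  have casts : ((s - 1 : ℕ) : ℝ) = (s : ℝ) - 1 := by
    rw [Nat.cast_sub hs]; norm_num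
  have hH1 : IsHomForm m (k - 1) (xOp m P₄) := by
    have := isHomForm_xOp hH
    rwa [show k - 2 + 1 = k - 1 by omega] at this
  have hH2 : IsHomForm m (k - 1) (xStarOp m P₄) := by
    have := isHomForm_xStarOp hH
    rwa [show k - 2 + 1 = k - 1 by omega] at this
  have hS1 : IsSForm m (s + 1) (xOp m P₄) := isSForm_xOp hS
  have hS2 : IsSForm m (s - 1) (xStarOp m P₄) := isSForm_xStarOp hs hS
  -- d(x* P₄) = c₁ P₄
  have e1 : dOp m (xStarOp m P₄) = c₁ • P₄ := by
    have h := LinearMap.congr_fun (A1 m) P₄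
    rw [LinearMap.add_apply, Module.End.mul_apply, Module.End.mul_apply, hd, map_zero, add_zero,
      LinearMap.add_apply, euler_eigen hH, skew_eigen hS] at h
    rw [h, ← Nat.cast_smul_eq_nsmul ℝ (k - 2), ← Nat.cast_smul_eq_nsmul ℝ s, ← add_smul, cast2,
      hc₁]
  -- d*(x P₄) = c₂ P₄
  have e2 : dStarOp m (xOp m P₄) = c₂ • P₄ := by
    have h := LinearMap.congr_fun (A2 m) P₄
    rw [LinearMap.add_apply, Module.End.mul_apply, Module.End.mul_apply, hds, map_zero, add_zero,
      LinearMap.add_apply, LinearMap.sub_apply, LinearMap.smul_apply, Module.End.one_apply,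
      euler_eigen hH, skew_eigen hS] at h
    rw [h, ← Nat.cast_smul_eq_nsmul ℝ (k - 2), ← Nat.cast_smul_eq_nsmul ℝ s,
      ← Nat.cast_smul_eq_nsmul ℝ m, ← sub_smul, ← add_smul, cast2, hc₂]
    congr 1; ring
  -- d*(x* P₄) = 0
  have e3 : dStarOp m (xStarOp m P₄) = 0 := by
    have h := LinearMap.congr_fun (A4 m) P₄
    rw [LinearMap.add_apply, Module.End.mul_apply, Module.End.mul_apply, hds, map_zero, add_zero,
      LinearMap.zero_apply] at h
    exact h
  -- d(x P₄) = 0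
  have e4 : dOp m (xOp m P₄) = 0 := by
    have h := LinearMap.congr_fun (A3 m) P₄
    rw [LinearMap.add_apply, Module.End.mul_apply, Module.End.mul_apply, hd, map_zero, add_zero,
      LinearMap.zero_apply] at h
    exact h
  -- d*(x x* P₄) = (c₂+2) x* P₄
  have e5 : dStarOp m (xOp m (xStarOp m P₄)) = (c₂ + 2) • xStarOp m P₄ := by
    have h := LinearMap.congr_fun (A2 m) (xStarOp m P₄)
    rw [LinearMap.add_apply, Module.End.mul_apply, Module.End.mul_apply, e3, map_zero, add_zero,
      LinearMap.add_apply, LinearMap.sub_apply, LinearMap.smul_apply, Module.End.one_apply,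
      euler_eigen hH2, skew_eigen hS2] at h
    rw [h, ← Nat.cast_smul_eq_nsmul ℝ (k - 1), ← Nat.cast_smul_eq_nsmul ℝ (s - 1),
      ← Nat.cast_smul_eq_nsmul ℝ m, ← sub_smul, ← add_smul, cast1, casts, hc₂]
    congr 1; ring
  -- d*(x* x P₄) = -c₂ x* P₄
  have e6 : dStarOp m (xStarOp m (xOp m P₄)) = (-c₂) • xStarOp m P₄ := by
    have h := LinearMap.congr_fun (A4 m) (xOp m P₄)
    rw [LinearMap.add_apply, Module.End.mul_apply, Module.End.mul_apply, e2, map_smul,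
      LinearMap.zero_apply] at h
    rw [eq_neg_of_add_eq_zero_left h, ← neg_smul]
  -- d(x* x P₄) = (c₁+2) x P₄
  have e7 : dOp m (xStarOp m (xOp m P₄)) = (c₁ + 2) • xOp m P₄ := by
    have h := LinearMap.congr_fun (A1 m) (xOp m P₄)
    rw [LinearMap.add_apply, Module.End.mul_apply, Module.End.mul_apply, e4, map_zero, add_zero,
      LinearMap.add_apply, euler_eigen hH1, skew_eigen hS1] at h
    rw [h, ← Nat.cast_smul_eq_nsmul ℝ (k - 1), ← Nat.cast_smul_eq_nsmul ℝ (s + 1), ← add_smul,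
      cast1, hc₁]
    congr 1; push_cast; ring
  -- d(x x* P₄) = -c₁ x P₄
  have e8 : dOp m (xOp m (xStarOp m P₄)) = (-c₁) • xOp m P₄ := by
    have h := LinearMap.congr_fun (A3 m) (xStarOp m P₄)
    rw [LinearMap.add_apply, Module.End.mul_apply, Module.End.mul_apply, e1, map_smul,
      LinearMap.zero_apply] at h
    rw [eq_neg_of_add_eq_zero_left h, ← neg_smul]
  have hQ : Q = c₂ • (xOp m (xStarOp m P₄)) - c₁ • (xStarOp m (xOp m P₄)) := by
    show (c₂ • (xOp m ∘ₗ xStarOp m) - c₁ • (xStarOp m ∘ₗ xOp m)) P₄ = _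
    rw [LinearMap.sub_apply, LinearMap.smul_apply, LinearMap.smul_apply, LinearMap.comp_apply,
      LinearMap.comp_apply]
  have hdQ : dOp m Q = (c₂ * (-c₁) - c₁ * (c₁ + 2)) • xOp m P₄ := by
    rw [hQ, map_sub, map_smul, map_smul, e8, e7, smul_smul, smul_smul, ← sub_smul]
  have hdsQ : dStarOp m Q = (c₂ * (c₂ + 2) - c₁ * (-c₂)) • xStarOp m P₄ := by
    rw [hQ, map_sub, map_smul, map_smul, e5, e6, smul_smul, smul_smul, ← sub_smul]
  constructor
  · rw [hdsQ, map_smul, e1, smul_smul]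
    congr 1; ring
  · rw [hdQ, map_smul, e2, smul_smul]
    congr 1; ring
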